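/- In a Beth-Kripke model M, for every epistemic formula φ and node α of a Beth world: α ⊩_M φ if and only if there is a bar B for α such that every β ∈ B forces φ under ⊩_M. -/

import Mathlib

/-- A path through `α`: a maximal chain containing `α`. -/
def IsPath {Q : Type} [PartialOrder Q] (α : Q) (P : Set Q) : Prop :=
  α ∈ P ∧ IsChain (· ≤ ·) P ∧ ∀ P' : Set Q, IsChain (· ≤ ·) P' → P ⊆ P' → P' = P

/-- A bar for `α`: a set meeting every path through `α`. -/
def IsBar {Q : Type} [PartialOrder Q] (α : Q) (B : Set Q) : Prop :=
  ∀ P : Set Q, IsPath α P → (B ∩ P).Nonempty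

/-- Epistemic formulas over agents `Ag` and atoms `At`. -/
inductive EForm (Ag At : Type) : Type
  | atom : At → EForm Ag At
  | and  : EForm Ag At → EForm Ag At → EForm Ag At
  | or   : EForm Ag At → EForm Ag At → EForm Ag At
  | imp  : EForm Ag At → EForm Ag At → EForm Ag At
  | neg  : EForm Ag At → EForm Ag At
  | know : Ag → EForm Ag At → EForm Ag At

/-- A Beth-Kripke model: a set of pointed (rooted) Beth worlds with accessibility
relations between worlds. -/
structure BK (Ag At : Type) where
  S : Type
  Node : S → Type
  [ord : ∀ s, PartialOrder (Node s)]
  root : ∀ s, Node s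
  root_le : ∀ (s : S) (β : Node s), root s ≤ β
  F : ∀ s, Node s → Set At
  F_mono : ∀ {s : S} {a b : Node s}, a ≤ b → F s a ⊆ F s b
  acc : Ag → S → S → Prop

attribute [instance] BK.ord

/-- Epistemic Beth forcing `α ⊩_M φ` at node `α` of world `s`. -/
def BK.force {Ag At : Type} (M : BK Ag At) : EForm Ag At → ∀ s : M.S, M.Node s → Prop
  | .atom p, s, α => ∃ B, IsBar α B ∧ ∀ β ∈ B, p ∈ M.F s β
  | .and A B, s, α => M.force A s α ∧ M.force B s α
  | .or A B, s, α => ∃ Bb, IsBar α Bb ∧ ∀ β ∈ Bb, M.force A s β ∨ M.force B s β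
  | .imp A B, s, α => ∀ β, α ≤ β → M.force A s β → M.force B s β
  | .neg A, s, α => ∀ β, α ≤ β → ¬ M.force A s β
  | .know i A, s, _ => ∀ t, M.acc i s t → ∀ β : M.Node t, M.force A t β

/-! Forcing is monotone, and the clauses for atoms and disjunctions already say "some bar forces
it". A path through `α` that passes through `β` is a path through `β`, so a bar of bars is a bar;
this settles atoms and disjunctions. For `→` and `¬` at `γ ≥ α`, a bar `B` for `α` is cut down to
a bar for `γ`: a path `P` through `γ` meets `B` below `γ` or in `P` above `γ`, since `B` meets a
maximal chain extending `{α}` together with the part of `P` above `γ`. The clause for `K_i` does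
not depend on the node, and bars are nonempty. -/

section Bars

variable {Q : Type} [PartialOrder Q] {α β γ : Q} {B P : Set Q}

theorem IsPath.isChain (hP : IsPath α P) : IsChain (· ≤ ·) P :=
  hP.2.1

theorem IsPath.of_mem (hP : IsPath α P) (hβ : β ∈ P) : IsPath β P :=
  ⟨hβ, hP.2⟩

theorem IsPath.mem_of_forall_le_or_ge (hP : IsPath α P) (h : ∀ γ ∈ P, β ≤ γ ∨ γ ≤ β) :
    β ∈ P :=
  hP.2.2 _ (hP.isChain.insert fun γ hγ _ => h γ hγ) (Set.subset_insert β P) ▸ Set.mem_insert β P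

theorem IsChain.exists_isPath {s : Set Q} (hs : IsChain (· ≤ ·) s) (hα : α ∈ s) :
    ∃ P, IsPath α P ∧ s ⊆ P := by
  obtain ⟨P, ⟨hP, hmax⟩, hsP⟩ := hs.exists_maxChain
  exact ⟨P, ⟨hsP hα, hP, fun _ h h' => (hmax h h').symm⟩, hsP⟩

theorem IsBar.singleton (α : Q) : IsBar α {α} :=
  fun _ hP => ⟨α, rfl, hP.1⟩

theorem IsBar.nonempty (hB : IsBar α B) : B.Nonempty := by
  obtain ⟨P, hP, -⟩ := (IsChain.singleton (r := (· ≤ ·))).exists_isPath (Set.mem_singleton α)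
  exact (hB P hP).mono Set.inter_subset_left

theorem IsBar.biUnion (hB : IsBar α B) {C : Q → Set Q} (hC : ∀ β ∈ B, IsBar β (C β)) :
    IsBar α (⋃ β ∈ B, C β) := by
  intro P hP
  obtain ⟨β, hβB, hβP⟩ := hB P hP
  obtain ⟨δ, hδC, hδP⟩ := hC β hβB P (hP.of_mem hβP)
  exact ⟨δ, Set.mem_biUnion hβB hδC, hδP⟩

theorem IsBar.restrict (hB : IsBar α B) (hαγ : α ≤ γ) :
    IsBar γ {δ | γ ≤ δ ∧ ∃ β ∈ B, β ≤ δ} := by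
  intro P hP
  have hC : IsChain (· ≤ ·) (insert α {q ∈ P | γ ≤ q}) :=
    (hP.isChain.mono (Set.sep_subset _ _)).insert fun q hq _ => Or.inl (hαγ.trans hq.2)
  obtain ⟨P', hP', hCP'⟩ := hC.exists_isPath (Set.mem_insert α _)
  obtain ⟨β, hβB, hβP'⟩ := hB P' hP'
  have hγP' : γ ∈ P' := hCP' (Or.inr ⟨hP.1, le_rfl⟩)
  rcases hP'.isChain.total hβP' hγP' with hβγ | hγβ
  · exact ⟨γ, ⟨le_rfl, β, hβB, hβγ⟩, hP.1⟩
  refine ⟨β, ⟨hγβ, β, hβB, le_rfl⟩, hP.mem_of_forall_le_or_ge fun q hq => ?_⟩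
  rcases hP.isChain.total hq hP.1 with hqγ | hγq
  · exact Or.inr (hqγ.trans hγβ)
  · exact hP'.isChain.total hβP' (hCP' (Or.inr ⟨hq, hγq⟩))

def IsBarred (α : Q) (p : Q → Prop) : Prop :=
  ∃ B, IsBar α B ∧ ∀ β ∈ B, p β

variable {p q : Q → Prop}

theorem IsBarred.self (h : p α) : IsBarred α p :=
  ⟨{α}, IsBar.singleton α, fun _ hβ => hβ ▸ h⟩

theorem IsBarred.mono (h : IsBarred α p) (hpq : ∀ β, p β → q β) : IsBarred α q :=
  let ⟨B, hB, hp⟩ := h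
  ⟨B, hB, fun β hβ => hpq β (hp β hβ)⟩

theorem IsBarred.exists (h : IsBarred α p) : ∃ β, p β :=
  let ⟨_, hB, hp⟩ := h
  let ⟨β, hβ⟩ := hB.nonempty
  ⟨β, hp β hβ⟩

theorem IsBarred.trans (h : IsBarred α fun β => IsBarred β p) : IsBarred α p := by
  obtain ⟨B, hB, hC⟩ := h
  choose! C hCbar hCp using hC
  refine ⟨⋃ β ∈ B, C β, hB.biUnion hCbar, fun δ hδ => ?_⟩
  obtain ⟨β, hβ, hδC⟩ := Set.mem_iUnion₂.1 hδ
  exact hCp β hβ δ hδC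

theorem IsBarred.of_le (h : IsBarred α p) (hp : Monotone p) (hαγ : α ≤ γ) :
    IsBarred γ fun δ => γ ≤ δ ∧ p δ :=
  let ⟨_, hB, hpB⟩ := h
  ⟨_, hB.restrict hαγ, fun _ ⟨hγδ, β, hβ, hβδ⟩ => ⟨hγδ, hp hβδ (hpB β hβ)⟩⟩

end Bars

namespace BK

variable {Ag At : Type} (M : BK Ag At)

theorem force_monotone (φ : EForm Ag At) (s : M.S) : Monotone (M.force φ s) := by
  induction φ with
  | atom p =>
    exact fun _ _ hαγ h =>
      (IsBarred.of_le h (fun _ _ hβδ hβ => M.F_mono hβδ hβ) hαγ).mono fun _ => And.right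
  | and A B ihA ihB => exact ihA.inf ihB
  | or A B ihA ihB =>
    exact fun _ _ hαγ h => (IsBarred.of_le h (ihA.sup ihB) hαγ).mono fun _ => And.right
  | imp A B => exact fun _ _ hαγ h δ hγδ => h δ (hαγ.trans hγδ)
  | neg A => exact fun _ _ hαγ h δ hγδ => h δ (hαγ.trans hγδ)
  | know i A => exact fun _ _ _ h => h

theorem force_of_isBarred (φ : EForm Ag At) (s : M.S) (α : M.Node s)
    (h : IsBarred α (M.force φ s)) : M.force φ s α := by
  induction φ generalizing α with
  | atom p => exact h.trans
  | or A B => exact h.trans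
  | and A B ihA ihB =>
    exact ⟨ihA α (h.mono fun _ => And.left), ihB α (h.mono fun _ => And.right)⟩
  | imp A B _ ihB =>
    intro γ hαγ hA
    refine ihB γ ((h.of_le (M.force_monotone _ s) hαγ).mono ?_)
    rintro δ ⟨hγδ, hAB⟩
    exact hAB δ le_rfl (M.force_monotone A s hγδ hA)
  | neg A =>
    intro γ hαγ hA
    obtain ⟨δ, hγδ, hnA⟩ := (h.of_le (M.force_monotone _ s) hαγ).exists
    exact hnA δ le_rfl (M.force_monotone A s hγδ hA)
  | know i A =>
    obtain ⟨β, hβ⟩ := h.exists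
    exact hβ

end BK

/-- `α ⊩_M φ` iff some bar for `α` forces `φ` throughout. -/
theorem epistemic_force_iff_bar {Ag At : Type} (M : BK Ag At)
    (φ : EForm Ag At) (s : M.S) (α : M.Node s) :
    M.force φ s α ↔ ∃ B, IsBar α B ∧ ∀ β ∈ B, M.force φ s β :=
  ⟨IsBarred.self, M.force_of_isBarred φ s α⟩
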